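/- Let p be a prime and let R = 𝔽_p[t]/(t²); write each x ∈ R uniquely as x = x₁ + x₂·t with x₁, x₂ ∈ 𝔽_p. Define X = {(x, y, z) ∈ R³ : z₂ = x₁y₂ − x₂y₁}, and for (a,b,c,d) ∈ R⁴ define the line ℓ(a,b,c,d) = {(a + sc, b + sd, s) : s ∈ R} ⊆ R³. Let 𝓛 = {(a + αat, b + αbt, c + αct, d + αdt) ∈ R⁴ : a, b, c, d, α ∈ 𝔽_p, ad − bc = 1}. Then: (i) |X| = p⁵; (ii) for every λ ∈ 𝓛 the line ℓ(λ) is contained in X; and (iii) π(X) = 𝔽_p³, where π : R³ → 𝔽_p³ is the projection (x, y, z) ↦ (x₁, y₁, z₁). -/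
import Mathlib


open Set

/-- The ring `R = 𝔽_p[t]/(t²)` of dual numbers over `ZMod p`. -/
abbrev Dp (p : ℕ) : Type := DualNumber (ZMod p)

/-- The element `x₁ + x₂ t` of `R = 𝔽_p[t]/(t²)`. -/
def mkD (p : ℕ) (x₁ x₂ : ZMod p) : Dp p :=
  TrivSqZeroExt.inl x₁ + TrivSqZeroExt.inr x₂

/-- The set `X = {(x, y, z) ∈ R³ : z₂ = x₁ y₂ − x₂ y₁}`. -/
def Xset (p : ℕ) : Set (Dp p × Dp p × Dp p) :=
  {w | TrivSqZeroExt.snd w.2.2 =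
    TrivSqZeroExt.fst w.1 * TrivSqZeroExt.snd w.2.1 -
      TrivSqZeroExt.snd w.1 * TrivSqZeroExt.fst w.2.1}

/-- The line `ℓ(a,b,c,d) = {(a + sc, b + sd, s) : s ∈ R} ⊆ R³`. -/
def lineOfD (p : ℕ) (q : Dp p × Dp p × Dp p × Dp p) : Set (Dp p × Dp p × Dp p) :=
  {w | ∃ s : Dp p, w = (q.1 + s * q.2.2.1, q.2.1 + s * q.2.2.2, s)}

/-- The family `𝓛 = {(a + αat, b + αbt, c + αct, d + αdt) : a,b,c,d,α ∈ 𝔽_p, ad − bc = 1}`. -/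
def SL2lines (p : ℕ) : Set (Dp p × Dp p × Dp p × Dp p) :=
  {q | ∃ a b c d α : ZMod p, a * d - b * c = 1 ∧
    q = (mkD p a (α * a), mkD p b (α * b), mkD p c (α * c), mkD p d (α * d))}

/-- The projection `π : R³ → 𝔽_p³`, `(x, y, z) ↦ (x₁, y₁, z₁)`. -/
def projD (p : ℕ) (w : Dp p × Dp p × Dp p) : ZMod p × ZMod p × ZMod p :=
  (TrivSqZeroExt.fst w.1, TrivSqZeroExt.fst w.2.1, TrivSqZeroExt.fst w.2.2)

open TrivSqZeroExt in
noncomputable def XsetEquiv (p : ℕ) :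
    Xset p ≃ (ZMod p × ZMod p × ZMod p × ZMod p × ZMod p) where
  toFun w := (w.1.1.fst, w.1.1.snd, w.1.2.1.fst, w.1.2.1.snd, w.1.2.2.fst)
  invFun v := ⟨((v.1, v.2.1), (v.2.2.1, v.2.2.2.1),
      (v.2.2.2.2, v.1 * v.2.2.2.1 - v.2.1 * v.2.2.1)), rfl⟩
  left_inv w := by
    obtain ⟨⟨x, y, z⟩, h⟩ := w
    simp only [Xset, Set.mem_setOf_eq] at h
    ext <;> simp [← h]
  right_inv v := rfl

/-- **Theorem (the SL₂ example over `𝔽_p[t]/(t²)`).** `|X| = p⁵`; every line of `𝓛` is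
contained in `X`; and `π(X) = 𝔽_p³`. -/
theorem sl2_example (p : ℕ) (hp : p.Prime) :
    Nat.card (Xset p) = p ^ 5 ∧
    (∀ q ∈ SL2lines p, lineOfD p q ⊆ Xset p) ∧
    projD p '' Xset p = Set.univ := by
  constructor
  · rw [Nat.card_congr (XsetEquiv p)]
    simp [Nat.card_prod, Nat.card_zmod]
    ring
  constructor
  · rintro q ⟨a, b, c, d, α, hdet, rfl⟩ w ⟨s, rfl⟩
    simp only [Xset, Set.mem_setOf_eq, TrivSqZeroExt.snd_add, TrivSqZeroExt.fst_add,
      TrivSqZeroExt.snd_mul, TrivSqZeroExt.fst_mul, mkD, TrivSqZeroExt.fst_inl,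
      TrivSqZeroExt.snd_inl, TrivSqZeroExt.fst_inr, TrivSqZeroExt.snd_inr,
      smul_eq_mul, MulOpposite.smul_eq_mul_unop, MulOpposite.unop_op]
    linear_combination -TrivSqZeroExt.snd s * hdet
  · ext v
    simp only [Set.mem_image, Set.mem_univ, iff_true]
    exact ⟨(TrivSqZeroExt.inl v.1, TrivSqZeroExt.inl v.2.1, TrivSqZeroExt.inl v.2.2),
      by simp [Xset], rfl⟩
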